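/- arXiv:2307.08369 — 2 statements merged into one kernel-verified Lean document; each statement's English description precedes it below -/
import Mathlib

section
/- Let $k_0 \in \mathbb{R}$ and let $\varphi : [k_0, \infty) \to [0,\infty)$ be non-increasing. Suppose there exist constants $a, C > 0$ and $b > 1$ such that $\varphi(h) \le C (h-k)^{-a} \varphi(k)^b$ for all $h > k \ge k_0$. Then $\varphi(k_0 + d) = 0$, where $d = C^{1/a} \varphi(k_0)^{(b-1)/a} 2^{b/(b-1)}$. -/
/-!
Along the levels `kₙ = k₀ + d - d / 2ⁿ` the gaps are `d / 2ⁿ⁺¹`, so the decay inequality gives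
`φ kₙ₊₁ ≤ K Bⁿ (φ kₙ)ᵇ` with `B = 2ᵃ`. A recursion of this shape forces geometric decay
`φ kₙ ≤ φ k₀ qⁿ` with `q = 2^(-a/(b-1)) < 1` as soon as `K (φ k₀)^(b-1) ≤ q`, and the value of `d`
is exactly what makes this hold. Since `kₙ ≤ k₀ + d` and `φ` is non-increasing,
`φ (k₀ + d) = 0`.
-/

open Filter

theorem le_mul_pow_of_succ_le_mul_pow_mul_rpow {u : ℕ → ℝ} {K B b q : ℝ}
    (hu : ∀ n, 0 ≤ u n) (hK : 0 ≤ K) (hB : 0 ≤ B) (hb : 0 < b) (hq : 0 ≤ q)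
    (hBq : B * q ^ (b - 1) ≤ 1) (hKu : K * u 0 ^ (b - 1) ≤ q)
    (hstep : ∀ n, u (n + 1) ≤ K * B ^ n * u n ^ b) (n : ℕ) :
    u n ≤ u 0 * q ^ n := by
  induction n with
  | zero => simp
  | succ n ih =>
    have hsplit : ∀ x : ℝ, 0 ≤ x → x ^ b = x ^ (b - 1) * x := fun x hx => by
      rw [← Real.rpow_add_one' hx (by linarith), sub_add_cancel]
    have hqn : (q ^ n) ^ (b - 1) = (q ^ (b - 1)) ^ n := (Real.rpow_pow_comm hq _ n).symm
    calc u (n + 1) ≤ K * B ^ n * u n ^ b := hstep n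
      _ ≤ K * B ^ n * (u 0 * q ^ n) ^ b := by have := hu n; gcongr
      _ = (K * u 0 ^ (b - 1)) * (B * q ^ (b - 1)) ^ n * (u 0 * q ^ n) := by
          rw [Real.mul_rpow (hu 0) (by positivity), hsplit _ (hu 0), hsplit _ (by positivity),
            hqn, mul_pow]
          ring
      _ ≤ q * 1 ^ n * (u 0 * q ^ n) := by
          have := hu 0
          gcongr
      _ = u 0 * q ^ (n + 1) := by ring

theorem add_sub_div_two_pow_mem_Icc {k₀ d : ℝ} (hd : 0 ≤ d) (n : ℕ) :
    k₀ + d - d / 2 ^ n ∈ Set.Icc k₀ (k₀ + d) := by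
  have hle : d / 2 ^ n ≤ d := div_le_self hd (one_le_pow₀ one_le_two)
  constructor <;> linarith [show 0 ≤ d / 2 ^ n by positivity]

theorem succ_le_mul_pow_mul_rpow_of_decay {φ : ℝ → ℝ} {k₀ d a C b : ℝ} (hd : 0 < d)
    (hineq : ∀ h k, k₀ ≤ k → k < h → φ h ≤ C / (h - k) ^ a * φ k ^ b) (n : ℕ) :
    φ (k₀ + d - d / 2 ^ (n + 1)) ≤
      C * 2 ^ a / d ^ a * (2 ^ a) ^ n * φ (k₀ + d - d / 2 ^ n) ^ b := by
  have hgap : k₀ + d - d / 2 ^ (n + 1) - (k₀ + d - d / 2 ^ n) = d / 2 ^ (n + 1) := by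
    rw [pow_succ]; field_simp; ring
  have hk : k₀ ≤ k₀ + d - d / 2 ^ n := (add_sub_div_two_pow_mem_Icc hd.le n).1
  have hlt : k₀ + d - d / 2 ^ n < k₀ + d - d / 2 ^ (n + 1) := by
    have := hgap ▸ (show 0 < d / 2 ^ (n + 1) by positivity)
    linarith
  convert hineq _ _ hk hlt using 2
  rw [hgap, Real.div_rpow hd.le (by positivity), ← Real.rpow_pow_comm zero_le_two, pow_succ]
  have : (0:ℝ) < 2 ^ a := by positivity
  field_simp

theorem mul_two_rpow_div_rpow_mul_rpow_eq {a C b P : ℝ} (ha : 0 < a) (hC : 0 < C) (hb : 1 < b)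
    (hP : 0 < P) :
    C * 2 ^ a / (C ^ (1 / a) * P ^ ((b - 1) / a) * 2 ^ (b / (b - 1))) ^ a * P ^ (b - 1) =
      2 ^ (-(a / (b - 1))) := by
  have hb1 : b - 1 ≠ 0 := by linarith
  have hpow : (C ^ (1 / a) * P ^ ((b - 1) / a) * 2 ^ (b / (b - 1))) ^ a =
      C * P ^ (b - 1) * 2 ^ (a * b / (b - 1)) := by
    rw [Real.mul_rpow (by positivity) (by positivity), Real.mul_rpow (by positivity) (by positivity),
      ← Real.rpow_mul hC.le, ← Real.rpow_mul hP.le, ← Real.rpow_mul zero_le_two,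
      one_div_mul_cancel ha.ne', Real.rpow_one, div_mul_cancel₀ _ ha.ne', div_mul_eq_mul_div,
      mul_comm b a]
  have hexp : a - a * b / (b - 1) = -(a / (b - 1)) := by field_simp; ring
  rw [hpow, ← hexp, Real.rpow_sub two_pos]
  field_simp

/-- Stampacchia's lemma, case `b > 1`. -/
theorem stampacchia_b_gt_one (k₀ : ℝ) (φ : ℝ → ℝ)
    (hφ_nonneg : ∀ h, k₀ ≤ h → 0 ≤ φ h)
    (hφ_mono : ∀ h k, k₀ ≤ k → k ≤ h → φ h ≤ φ k)
    (a C b : ℝ) (ha : 0 < a) (hC : 0 < C) (hb : 1 < b)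
    (hineq : ∀ h k, k₀ ≤ k → k < h → φ h ≤ C / (h - k) ^ a * (φ k) ^ b) :
    φ (k₀ + C ^ (1 / a) * (φ k₀) ^ ((b - 1) / a) * 2 ^ (b / (b - 1))) = 0 := by
  set d := C ^ (1 / a) * (φ k₀) ^ ((b - 1) / a) * 2 ^ (b / (b - 1))
  have hd₀ : 0 ≤ d := by have := hφ_nonneg k₀ le_rfl; positivity
  have hk := add_sub_div_two_pow_mem_Icc (k₀ := k₀) hd₀
  refine le_antisymm ?_ (hφ_nonneg _ (by linarith))
  rcases (hφ_nonneg k₀ le_rfl).eq_or_lt with hP | hP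
  · exact (hφ_mono _ _ le_rfl (by linarith)).trans hP.symm.le
  set q : ℝ := 2 ^ (-(a / (b - 1)))
  have hb1 : 0 < b - 1 := by linarith
  have hq : q < 1 := Real.rpow_lt_one_of_one_lt_of_neg one_lt_two (by simp; positivity)
  have hBq : 2 ^ a * q ^ (b - 1) ≤ 1 := by
    rw [← Real.rpow_mul zero_le_two, neg_mul, div_mul_cancel₀ _ hb1.ne', Real.rpow_neg zero_le_two,
      mul_inv_cancel₀ (by positivity)]
  have hk₀ : k₀ + d - d / 2 ^ 0 = k₀ := by simp
  have hdecay := le_mul_pow_of_succ_le_mul_pow_mul_rpow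
    (u := fun n : ℕ => φ (k₀ + d - d / 2 ^ n)) (fun n => hφ_nonneg _ (hk n).1) (by positivity)
    (by positivity) (by linarith) (by positivity) hBq
    (by simp only [hk₀]; exact (mul_two_rpow_div_rpow_mul_rpow_eq ha hC hb hP).le)
    (succ_le_mul_pow_mul_rpow_of_decay (by positivity) hineq)
  simp only [hk₀] at hdecay
  refine ge_of_tendsto' (x := atTop) ?_ fun n => (hφ_mono _ _ (hk n).1 (hk n).2).trans (hdecay n)
  simpa using (tendsto_pow_atTop_nhds_zero_of_lt_one (by positivity) hq).const_mul (φ k₀)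
end

section
/- Let $N \ge 2$, $1 < p < N$, $p^* = Np/(N-p)$, $r > N/p$. Define $\beta(\gamma) = \left(1 - \frac{1}{\gamma} - \frac{1}{r}\right)\frac{p^*}{p}$. Suppose $\beta(p^*) < 1$. Then the recursively defined iteration $\gamma_1 = p^*$, $\gamma_{i+1} \in \left(\frac{p^*}{1 - \beta(\gamma_{i-1})}, \frac{p^*}{1 - \beta(\gamma_i)}\right)$ (whenever $\beta(\gamma_i) < 1$) cannot continue indefinitely: there exists $n \ge 2$ such that $\beta(\gamma_n) \ge 1$. -/
/-- The bootstrap iteration in Case (B) of Proposition 3.1 terminates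
in finitely many steps. -/
theorem bootstrap_terminates (N : ℕ) (hN : 2 ≤ N) (p r : ℝ)
    (hp1 : 1 < p) (hpN : p < N) (hr : (N : ℝ) / p < r)
    (β : ℝ → ℝ) (hβ : ∀ γ : ℝ, β γ = (1 - 1 / γ - 1 / r) * ((N * p / (N - p)) / p))
    (hβpstar : β (N * p / (N - p)) < 1)
    (γ : ℕ → ℝ) (hγ1 : γ 1 = N * p / (N - p))
    (hγ2 : N * p / (N - p) < γ 2 ∧ γ 2 < N * p / (N - p) / (1 - β (γ 1)))
    (hrec : ∀ i : ℕ, 2 ≤ i → β (γ (i - 1)) < 1 → β (γ i) < 1 →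
      N * p / (N - p) / (1 - β (γ (i - 1))) < γ (i + 1) ∧
        γ (i + 1) < N * p / (N - p) / (1 - β (γ i))) :
    ∃ n : ℕ, 2 ≤ n ∧ 1 ≤ β (γ n) := by
  by_contra hcon
  push_neg at hcon
  -- hcon : ∀ n, 2 ≤ n → β (γ n) < 1
  have hp0 : (0:ℝ) < p := by linarith
  have hNp : (0:ℝ) < (N:ℝ) - p := by linarith
  have hN0 : (0:ℝ) < (N:ℝ) := by linarith
  set P : ℝ := (N:ℝ) * p / ((N:ℝ) - p) with hPdef
  have hP0 : 0 < P := by positivity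
  have hr0 : (0:ℝ) < r := lt_trans (by positivity) hr
  have hinvr : 1 / r < p / N := by
    rw [div_lt_div_iff₀ hr0 hN0]
    have := (div_lt_iff₀ hp0).mp hr
    linarith
  have hε0 : 0 < (P - p - P / r) / p := by
    have h1 : P / r < P * (p / N) := by
      rw [div_eq_mul_one_div P r]
      exact mul_lt_mul_of_pos_left hinvr hP0
    have h2 : P * (p / N) = p * p / ((N:ℝ) - p) := by
      field_simp [hPdef]
      have : P * ((N:ℝ) - p) = N * p := by rw [hPdef, div_mul_cancel₀ _ hNp.ne']
      linear_combination this
    have h3 : P - p = p * p / ((N:ℝ) - p) := by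
      field_simp [hPdef]
      have : P * ((N:ℝ) - p) = N * p := by rw [hPdef, div_mul_cancel₀ _ hNp.ne']
      linear_combination this
    have h4 : P / r < P - p := by rw [h3]; rw [h2] at h1; exact h1
    apply div_pos (by linarith) hp0
  set ε : ℝ := (P - p - P / r) / p with hεdef
  -- key step lemma
  have key : ∀ b g : ℝ, b < 1 → P / (1 - b) < g → b + ε ≤ β g := by
    intro b g hb hg
    have h1b : (0:ℝ) < 1 - b := by linarith
    have hg0 : 0 < g := lt_trans (by positivity) hg
    have hP' : P < (1 - b) * g := by
      have := (div_lt_iff₀ h1b).mp hg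
      linarith [mul_comm g (1 - b)]
    have hinv : 1 / g < (1 - b) / P := by
      rw [div_lt_div_iff₀ hg0 hP0]
      linarith
    have hPp : (0:ℝ) < P / p := by positivity
    have hstep : (1 - (1 - b) / P - 1 / r) * (P / p) < β g := by
      rw [hβ g]
      apply mul_lt_mul_of_pos_right _ hPp
      linarith
    have hsum : b + ε ≤ (1 - (1 - b) / P - 1 / r) * (P / p) := by
      rw [hεdef, ← sub_nonneg]
      have e3 : (1 - (1 - b) / P - 1 / r) * (P / p) - (b + (P - p - P / r) / p)
          = (1 - b) * (p - 1) / p := by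
        field_simp
        ring
      rw [e3]
      exact div_nonneg (mul_nonneg h1b.le (by linarith)) hp0.le
    linarith
  have hβ1 : β (γ 1) < 1 := by rw [hγ1]; exact hβpstar
  have chain : ∀ k : ℕ, β (γ 1) + k * ε ≤ β (γ (2 * k + 1)) := by
    intro k
    induction k with
    | zero => simp
    | succ n ih =>
      have hlt : β (γ (2 * n + 1)) < 1 := by
        rcases Nat.eq_zero_or_pos n with h | h
        · subst h; simpa using hβ1
        · exact hcon _ (by omega)
      have hlt2 : β (γ (2 * n + 2)) < 1 := hcon _ (by omega)
      have e1 : (2 * n + 2) - 1 = 2 * n + 1 := by omega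
      have hrec' := hrec (2 * n + 2) (by omega) (by rw [e1]; exact hlt) hlt2
      rw [e1] at hrec'
      have hkey := key (β (γ (2 * n + 1))) (γ (2 * n + 2 + 1)) hlt hrec'.1
      have e2 : 2 * (n + 1) + 1 = 2 * n + 2 + 1 := by omega
      rw [e2]
      push_cast
      linarith
  obtain ⟨k, hk⟩ := exists_nat_gt ((1 - β (γ 1)) / ε)
  have hk' : 1 - β (γ 1) < (k : ℝ) * ε := by
    rw [div_lt_iff₀ hε0] at hk
    linarith
  have hfin := chain (k + 1)
  have hlt : β (γ (2 * (k + 1) + 1)) < 1 := hcon _ (by omega)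
  push_cast at hfin
  nlinarith
end
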